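/- arXiv:1207.6868 — 4 statements merged into one kernel-verified Lean document; each statement's English description precedes it below -/
import Mathlib

section
/- For any L > 0 and z ∈ ℝ, B_L(z) = min over w ≥ max(L, |z|) of (w²/(2L) − w + |z| + L/2); i.e., the BerHu function admits a variational representation as the minimum of a quadratic function of an auxiliary variable w over the interval [max(L,|z|), ∞). -/
noncomputable def berhu (L z : ℝ) : ℝ := if |z| ≤ L then |z| else (z ^ 2 + L ^ 2) / (2 * L)

theorem berhu_variational (L : ℝ) (hL : 0 < L) (z : ℝ) :
    IsLeast {y : ℝ | ∃ w : ℝ, max L |z| ≤ w ∧ y = w ^ 2 / (2 * L) - w + |z| + L / 2}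
      (berhu L z) := by
  constructor
  · refine ⟨max L |z|, le_refl _, ?_⟩
    unfold berhu
    rcases le_or_gt |z| L with h | h
    · rw [if_pos h, max_eq_left h]
      field_simp; ring
    · rw [if_neg (not_le.mpr h), max_eq_right h.le]
      have := sq_abs z
      field_simp
      nlinarith [sq_abs z]
  · rintro y ⟨w, hw, rfl⟩
    have h1 : L ≤ w := le_trans (le_max_left _ _) hw
    have h2 : |z| ≤ w := le_trans (le_max_right _ _) hw
    unfold berhu
    rcases le_or_gt |z| L with h | h
    · rw [if_pos h]
      have key : w ^ 2 / (2 * L) - w + |z| + L / 2 = (w - L) ^ 2 / (2 * L) + |z| := by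
        field_simp; ring
      have : (0:ℝ) ≤ (w - L) ^ 2 / (2 * L) := by positivity
      linarith
    · rw [if_neg (not_le.mpr h)]
      have key : w ^ 2 / (2 * L) - w + |z| + L / 2 =
          (z ^ 2 + L ^ 2) / (2 * L) + ((w - |z|) * (w + |z| - 2 * L)) / (2 * L) := by
        field_simp; nlinarith [sq_abs z]
      have : (0:ℝ) ≤ ((w - |z|) * (w + |z| - 2 * L)) / (2 * L) := by
        apply div_nonneg _ (by positivity)
        apply mul_nonneg (by linarith) (by nlinarith [abs_nonneg z])
      linarith
end

section
/- Let L > 0 and β ∈ ℝ^p with β ≠ 0, and let |β_(1)| ≥ |β_(2)| ≥ … ≥ |β_(p)| be the absolute values of its coordinates sorted in decreasing order, with k(β) the number of nonzero coordinates. Suppose q is an integer with 2 ≤ q ≤ k(β)+1 such that setting τ̂ = sqrt( (Σ_{j=1}^{q−1} β_(j)²) / (2Lp + L²(q−1)) ) one has |β_(q)|/L ≤ τ̂ ≤ |β_(q−1)|/L (where β_(k(β)+1) := 0). Then the minimum over τ > 0 of pτ + τ Σ_{j=1}^p B_L(β_j/τ) equals sqrt(2p/L + q − 1) · sqrt(Σ_{j=1}^{q−1}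 β_(j)²) + Σ_{j=q}^{k(β)} |β_(j)|. -/
open Finset

lemma berhu_abs (L z : ℝ) : berhu L |z| = berhu L z := by
  simp only [berhu, abs_abs, sq_abs]

section Perspective

variable {L τ t z : ℝ}

lemma mul_berhu_div_of_abs_le (hτ : 0 < τ) (h : |z| ≤ L * τ) : τ * berhu L (z / τ) = |z| := by
  rw [berhu, abs_div, abs_of_pos hτ, if_pos ((div_le_iff₀ hτ).2 h)]
  field_simp

lemma mul_berhu_div_of_le_abs (hL : 0 < L) (hτ : 0 < τ) (h : L * τ ≤ |z|) :
    τ * berhu L (z / τ) = L * τ + (z ^ 2 - (L * τ) ^ 2) / (2 * L * τ) := by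
  rcases h.eq_or_lt with h | h
  · rw [mul_berhu_div_of_abs_le hτ h.ge, ← h, ← sq_abs, ← h]
    field_simp
    ring
  · rw [berhu, abs_div, abs_of_pos hτ, if_neg (by rw [div_le_iff₀ hτ]; linarith)]
    field_simp
    ring

lemma le_mul_berhu_div_of_le_abs (hL : 0 < L) (hτ : 0 < τ) (h : L * t ≤ |z|) :
    L * t + (z ^ 2 - (L * t) ^ 2) / (2 * L * τ) ≤ τ * berhu L (z / τ) := by
  rw [← sub_nonneg]
  rcases le_total |z| (L * τ) with hz | hz
  · have key : τ * berhu L (z / τ) - (L * t + (z ^ 2 - (L * t) ^ 2) / (2 * L * τ)) =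
        (|z| - L * t) * (2 * L * τ - |z| - L * t) / (2 * L * τ) := by
      rw [mul_berhu_div_of_abs_le hτ hz, ← sq_abs]
      field_simp
      ring
    rw [key]
    apply div_nonneg (mul_nonneg _ _) <;> nlinarith
  · have key : τ * berhu L (z / τ) - (L * t + (z ^ 2 - (L * t) ^ 2) / (2 * L * τ)) =
        L * (τ - t) ^ 2 / (2 * τ) := by
      rw [mul_berhu_div_of_le_abs hL hτ hz]
      field_simp
      ring
    rw [key]
    positivity

lemma abs_le_mul_berhu_div (hL : 0 < L) (hτ : 0 < τ) : |z| ≤ τ * berhu L (z / τ) := by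
  have h := le_mul_berhu_div_of_le_abs (t := |z| / L) hL hτ (mul_div_cancel₀ _ hL.ne').le
  rwa [mul_div_cancel₀ _ hL.ne', ← sq_abs, sub_self, zero_div, add_zero] at h

end Perspective

lemma sum_range_add_sq_sub_sq_div (a c : ℝ) (b : ℕ → ℝ) (m : ℕ) :
    ∑ j ∈ range m, (a + (b j ^ 2 - a ^ 2) / c) = m * a + (∑ j ∈ range m, b j ^ 2 - m * a ^ 2) / c := by
  simp only [sum_add_distrib, ← sum_div, sum_sub_distrib, sum_const, card_range, nsmul_eq_mul]

section Sorted

variable {L t τ : ℝ} {b : ℕ → ℝ} {m n : ℕ}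

lemma le_sum_range_mul_berhu_div (hL : 0 < L) (hτ : 0 < τ) (hm : m ≤ n)
    (hbig : ∀ j < m, L * t ≤ |b j|) :
    m * (L * t) + (∑ j ∈ range m, b j ^ 2 - m * (L * t) ^ 2) / (2 * L * τ) +
        ∑ j ∈ Ico m n, |b j| ≤ ∑ j ∈ range n, τ * berhu L (b j / τ) := by
  rw [← sum_range_add_sum_Ico _ hm, ← sum_range_add_sq_sub_sq_div]
  gcongr with j hj j
  · exact le_mul_berhu_div_of_le_abs hL hτ (hbig j (mem_range.1 hj))
  · exact abs_le_mul_berhu_div hL hτ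

lemma sum_range_mul_berhu_div_eq (hL : 0 < L) (hτ : 0 < τ) (hm : m ≤ n)
    (hbig : ∀ j < m, L * τ ≤ |b j|) (hsmall : ∀ j ∈ Ico m n, |b j| ≤ L * τ) :
    ∑ j ∈ range n, τ * berhu L (b j / τ) =
      m * (L * τ) + (∑ j ∈ range m, b j ^ 2 - m * (L * τ) ^ 2) / (2 * L * τ) +
        ∑ j ∈ Ico m n, |b j| := by
  rw [← sum_range_add_sum_Ico _ hm, ← sum_range_add_sq_sub_sq_div]
  congr 1 <;> refine sum_congr rfl fun j hj => ?_
  · exact mul_berhu_div_of_le_abs hL hτ (hbig j (mem_range.1 hj))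
  · exact mul_berhu_div_of_abs_le hτ (hsmall j hj)

theorem isLeast_sorted_berhu_pen (hL : 0 < L) (ht : 0 < t) (hm : m ≤ n)
    (hS : ∑ j ∈ range m, b j ^ 2 = (2 * L * n + L ^ 2 * m) * t ^ 2)
    (hbig : ∀ j < m, L * t ≤ |b j|) (hsmall : ∀ j ∈ Ico m n, |b j| ≤ L * t) :
    IsLeast {y : ℝ | ∃ τ : ℝ, 0 < τ ∧ y = n * τ + ∑ j ∈ range n, τ * berhu L (b j / τ)}
      ((2 * n + L * m) * t + ∑ j ∈ Ico m n, |b j|) := by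
  refine ⟨⟨t, ht, ?_⟩, ?_⟩
  · rw [sum_range_mul_berhu_div_eq hL ht hm hbig hsmall, hS]
    field_simp
    ring
  · rintro y ⟨τ, hτ, rfl⟩
    have hlow := le_sum_range_mul_berhu_div hL hτ hm hbig
    rw [hS] at hlow
    have hexcess : n * τ + (m * (L * t) + ((2 * L * n + L ^ 2 * m) * t ^ 2 - m * (L * t) ^ 2) /
        (2 * L * τ)) - (2 * n + L * m) * t = n * (τ - t) ^ 2 / τ := by
      field_simp
      ring
    have : 0 ≤ n * (τ - t) ^ 2 / τ := by positivity
    linarith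

end Sorted

lemma sqrt_add_mul_sqrt_eq {L n m t : ℝ} (hL : 0 < L) (hn : 0 ≤ n) (hm : 0 ≤ m) (ht : 0 ≤ t) :
    √(2 * n / L + m) * √((2 * L * n + L ^ 2 * m) * t ^ 2) = (2 * n + L * m) * t := by
  rw [← Real.sqrt_mul (by positivity),
    show (2 * n / L + m) * ((2 * L * n + L ^ 2 * m) * t ^ 2) = ((2 * n + L * m) * t) ^ 2 by
      field_simp, Real.sqrt_sq (by positivity)]

section Sorting

variable {b : ℕ → ℝ} {p : ℕ}

lemma sum_comp_eq_sum_range_of_abs {M : Type*} [AddCommMonoid M] {β : Fin p → ℝ}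
    {σ : Equiv.Perm (Fin p)} (hb : ∀ j : Fin p, b j = |β (σ j)|) {f : ℝ → M}
    (hf : ∀ x, f |x| = f x) : ∑ j, f (β j) = ∑ j ∈ range p, f (b j) := by
  rw [← Equiv.sum_comp σ, ← Fin.sum_univ_eq_sum_range (fun j => f (b j))]
  simp only [hb, hf]

lemma nonneg_of_antitone_of_eq_zero (hb : Antitone b) (hp : ∀ j, p ≤ j → b j = 0) (j : ℕ) :
    0 ≤ b j :=
  hp (max j p) (le_max_right j p) ▸ hb (le_max_left j p)

lemma ne_zero_iff_lt_card_of_antitone (hb : Antitone b) (hp : ∀ j, p ≤ j → b j = 0) (j : ℕ) :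
    b j ≠ 0 ↔ j < #{i ∈ range p | b i ≠ 0} := by
  have hnn := nonneg_of_antitone_of_eq_zero hb hp
  constructor
  · intro hj
    have hjp : j < p := by
      by_contra h
      exact hj (hp j (not_lt.1 h))
    calc j < #(range (j + 1)) := by simp
      _ ≤ _ := card_le_card fun i hi => by
        rw [mem_range] at hi
        rw [mem_filter, mem_range]
        exact ⟨by omega, ((lt_of_le_of_ne (hnn j) hj.symm).trans_le (hb (by omega))).ne'⟩
  · intro hj h0
    have : #{i ∈ range p | b i ≠ 0} ≤ #(range j) := card_le_card fun i hi => by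
      rw [mem_filter] at hi
      by_contra hij
      exact hi.2 (le_antisymm (h0 ▸ hb (not_lt.1 (mt mem_range.2 hij))) (hnn i))
    rw [card_range] at this
    omega

lemma ne_zero_iff_lt_card_of_sorted_abs {β : Fin p → ℝ} {σ : Equiv.Perm (Fin p)}
    (hb : ∀ j : Fin p, b j = |β (σ j)|) (hanti : Antitone b) (hp : ∀ j, p ≤ j → b j = 0)
    (j : ℕ) : b j ≠ 0 ↔ j < #{i | β i ≠ 0} := by
  convert ne_zero_iff_lt_card_of_antitone hanti hp j using 2
  rw [card_filter, card_filter]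
  exact sum_comp_eq_sum_range_of_abs hb (f := fun x => if x ≠ 0 then 1 else 0) (by simp)

lemma mul_sum_berhu_div_eq {L τ : ℝ} {β : Fin p → ℝ} {σ : Equiv.Perm (Fin p)}
    (hb : ∀ j : Fin p, b j = |β (σ j)|) (hτ : 0 < τ) :
    τ * ∑ j, berhu L (β j / τ) = ∑ j ∈ range p, τ * berhu L (b j / τ) := by
  rw [mul_sum, sum_comp_eq_sum_range_of_abs hb (f := fun x => τ * berhu L (x / τ)) fun x => by
    rw [← berhu_abs L (x / τ), abs_div, abs_of_pos hτ]]

end Sorting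

theorem berhu_pen_value_general (L : ℝ) (hL : 0 < L) (p : ℕ) (β : Fin p → ℝ)
    (b : ℕ → ℝ) (σ : Equiv.Perm (Fin p))
    (hb : ∀ j : Fin p, b (j : ℕ) = |β (σ j)|)
    (hb0 : ∀ j : ℕ, p ≤ j → b j = 0)
    (hsort : ∀ i j : ℕ, i ≤ j → b j ≤ b i)
    (k : ℕ) (hk : k = (Finset.univ.filter (fun j : Fin p => β j ≠ 0)).card)
    (q : ℕ) (hq2 : 2 ≤ q) (hqk : q ≤ k + 1)
    (τhat : ℝ)
    (hτhat : τhat =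
      Real.sqrt ((∑ j ∈ Finset.range (q - 1), b j ^ 2) /
        (2 * L * p + L ^ 2 * (q - 1 : ℕ))))
    (hlo : b (q - 1) / L ≤ τhat) (hhi : τhat ≤ b (q - 2) / L) :
    IsLeast {y : ℝ | ∃ τ : ℝ, 0 < τ ∧
        y = p * τ + τ * ∑ j : Fin p, berhu L (β j / τ)}
      (Real.sqrt (2 * p / L + (q : ℝ) - 1) *
          Real.sqrt (∑ j ∈ Finset.range (q - 1), b j ^ 2) +
        ∑ j ∈ Finset.Ico (q - 1) k, b j) := by
  have hanti : Antitone b := fun i j h => hsort i j h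
  have habs (j : ℕ) : |b j| = b j := abs_of_nonneg (nonneg_of_antitone_of_eq_zero hanti hb0 j)
  have hsupp (j : ℕ) : b j ≠ 0 ↔ j < k := hk ▸ ne_zero_iff_lt_card_of_sorted_abs hb hanti hb0 j
  have hkp : k ≤ p := hk ▸ (card_filter_le _ _).trans_eq (card_fin p)
  set m := q - 1
  have hqm : (m : ℝ) = q - 1 := Nat.cast_pred (by omega)
  have hm : (0 : ℝ) < m := Nat.cast_pos.2 (by omega)
  have hden : 0 < 2 * L * p + L ^ 2 * m := by positivity
  have hS : ∑ j ∈ range m, b j ^ 2 = (2 * L * p + L ^ 2 * m) * τhat ^ 2 := by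
    rw [hτhat, Real.sq_sqrt (by positivity), mul_div_cancel₀ _ hden.ne']
  have hlast : 0 < b (m - 1) := habs _ ▸ abs_pos.2 ((hsupp _).2 (by omega))
  have hτ : 0 < τhat := hτhat ▸ Real.sqrt_pos.2 (div_pos (sum_pos' (fun j _ => sq_nonneg _)
    ⟨m - 1, mem_range.2 (by omega), pow_pos hlast 2⟩) hden)
  have hbig : ∀ j < m, L * τhat ≤ |b j| := fun j hj => by
    rw [habs]; exact ((le_div_iff₀' hL).1 hhi).trans (hsort _ _ (by omega))
  have hsmall : ∀ j ∈ Ico m p, |b j| ≤ L * τhat := fun j hj => by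
    rw [habs]; exact (hsort _ _ (mem_Ico.1 hj).1).trans ((div_le_iff₀' hL).1 hlo)
  have htail : ∑ j ∈ Ico m p, |b j| = ∑ j ∈ Ico m k, b j := by
    simp only [habs]
    rw [← sum_Ico_consecutive _ (by omega : m ≤ k) hkp, add_eq_left]
    exact sum_eq_zero fun j hj => not_not.1 (mt (hsupp j).1 (mem_Ico.1 hj).1.not_gt)
  have hval : √(2 * p / L + (q : ℝ) - 1) * √(∑ j ∈ range m, b j ^ 2) = (2 * p + L * m) * τhat := by
    rw [add_sub_assoc, ← hqm, hS, sqrt_add_mul_sqrt_eq hL p.cast_nonneg hm.le hτ.le]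
  have hset : {y : ℝ | ∃ τ : ℝ, 0 < τ ∧ y = p * τ + τ * ∑ j : Fin p, berhu L (β j / τ)} =
      {y : ℝ | ∃ τ : ℝ, 0 < τ ∧ y = p * τ + ∑ j ∈ range p, τ * berhu L (b j / τ)} := by
    ext y
    exact exists_congr fun τ => and_congr_right fun hτ => by rw [mul_sum_berhu_div_eq hb hτ]
  rw [hset, hval, ← htail]
  exact isLeast_sorted_berhu_pen hL hτ (by omega) hS hbig hsmall

theorem berhu_pen_value (L : ℝ) (hL : 0 < L) (p : ℕ) (β : Fin p → ℝ) (hβ : β ≠ 0)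
    (b : ℕ → ℝ) (σ : Equiv.Perm (Fin p))
    (hb : ∀ j : Fin p, b (j : ℕ) = |β (σ j)|)
    (hb0 : ∀ j : ℕ, p ≤ j → b j = 0)
    (hsort : ∀ i j : ℕ, i ≤ j → b j ≤ b i)
    (k : ℕ) (hk : k = (Finset.univ.filter (fun j : Fin p => β j ≠ 0)).card)
    (q : ℕ) (hq2 : 2 ≤ q) (hqk : q ≤ k + 1)
    (τhat : ℝ)
    (hτhat : τhat =
      Real.sqrt ((∑ j ∈ Finset.range (q - 1), b j ^ 2) /
        (2 * L * p + L ^ 2 * (q - 1 : ℕ))))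
    (hlo : b (q - 1) / L ≤ τhat) (hhi : τhat ≤ b (q - 2) / L) :
    IsLeast {y : ℝ | ∃ τ : ℝ, 0 < τ ∧
        y = p * τ + τ * ∑ j : Fin p, berhu L (β j / τ)}
      (Real.sqrt (2 * p / L + (q : ℝ) - 1) *
          Real.sqrt (∑ j ∈ Finset.range (q - 1), b j ^ 2) +
        ∑ j ∈ Finset.Ico (q - 1) k, b j) :=
  berhu_pen_value_general L hL p β b σ hb hb0 hsort k hk q hq2 hqk τhat hτhat hlo hhi
end

section
/- Let L > 0, γ > 0, p₀ ≥ 1, and β* ∈ ℝ^p with β*_j ≠ 0 for j ≤ p₀ and β*_j = 0 for j > p₀ (so β* ≠ 0). Then the function I(τ) = τ·( Σ_{j=1}^p |β*_j|^γ + Σ_{j=1}^{p₀} B_L(β*_j/τ)/|β*_j|^γ ) attains its minimum over τ > 0 at a unique point τ* > 0. -/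
/-!
Write `I(τ) = A τ + ∑ⱼ τ B_L(βⱼ/τ) / |βⱼ|^γ` with `A = ∑ⱼ |βⱼ|^γ > 0`. For `b ≠ 0` the perspective
`τ B_L(b/τ)` equals `(b²/τ + L²τ)/(2L)` for `τ ≤ |b|/L` (strictly convex and decreasing there) and
the constant `|b|` for `τ ≥ |b|/L`. So `I` is continuous on `(0, ∞)` and grows like `1/τ` at `0`
and like `A τ` at `∞`, hence has a minimizer. Two minimizers `x < y` are impossible: if some term
is still on its quadratic branch at `x`, then `I` is strictly midpoint convex on `[x, y]`;
otherwise every term is constant on `[x, y]` and `I(y) - I(x) = A (y - x) > 0`.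
-/

open Filter Topology Set

/-- The value of `σ * berhu L (b / σ)` where `|b / σ| > L`. -/
noncomputable def berhuQuad (L b σ : ℝ) : ℝ := (b ^ 2 / σ + L ^ 2 * σ) / (2 * L)

section Berhu

variable {L b τ : ℝ}

theorem continuous_berhu (L : ℝ) : Continuous (berhu L) := by
  refine continuous_if_le continuous_abs continuous_const continuous_abs.continuousOn
    (by fun_prop) fun z hz => ?_
  have hz2 : z ^ 2 = L ^ 2 := by rw [← sq_abs, hz]
  rcases eq_or_ne L 0 with rfl | hL
  · simp [hz]
  · rw [hz, hz2]
    field_simp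
    ring

theorem sq_div_le_berhu (hL : 0 < L) (z : ℝ) : z ^ 2 / (2 * L) ≤ berhu L z := by
  unfold berhu
  split_ifs with h
  · rw [div_le_iff₀ (by positivity), ← sq_abs]
    nlinarith [abs_nonneg z]
  · gcongr
    exact le_add_of_nonneg_right (sq_nonneg L)

theorem berhu_nonneg (hL : 0 < L) (z : ℝ) : 0 ≤ berhu L z :=
  (by positivity : 0 ≤ z ^ 2 / (2 * L)).trans (sq_div_le_berhu hL z)

theorem mul_berhu_div (hL : 0 < L) (hb : b ≠ 0) (hτ : 0 < τ) :
    τ * berhu L (b / τ) = berhuQuad L b (min τ (|b| / L)) := by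
  have hbb : b ^ 2 = |b| ^ 2 := (sq_abs b).symm
  have hb' : 0 < |b| := abs_pos.mpr hb
  unfold berhu berhuQuad
  rw [abs_div, abs_of_pos hτ]
  split_ifs with h
  · rw [div_le_iff₀ hτ] at h
    rw [min_eq_right ((div_le_iff₀ hL).mpr (by linarith))]
    field_simp
    nlinarith
  · rw [not_le, lt_div_iff₀ hτ] at h
    rw [min_eq_left ((le_div_iff₀ hL).mpr (by linarith))]
    field_simp

theorem mul_berhu_div_of_le (hL : 0 < L) (hτ : 0 < τ) (h : |b| / L ≤ τ) :
    τ * berhu L (b / τ) = |b| := by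
  have hle : |b / τ| ≤ L := by
    rw [abs_div, abs_of_pos hτ, div_le_iff₀ hτ]
    rwa [div_le_iff₀ hL, mul_comm] at h
  rw [berhu, if_pos hle, abs_div, abs_of_pos hτ]
  field_simp

theorem berhuQuad_midpoint_gap (hL : L ≠ 0) {x y : ℝ} (hx : 0 < x) (hy : 0 < y) :
    (berhuQuad L b x + berhuQuad L b y) / 2 - berhuQuad L b ((x + y) / 2) =
      b ^ 2 * (x - y) ^ 2 / (4 * L * (x * y * (x + y))) := by
  unfold berhuQuad
  field_simp
  ring

theorem berhuQuad_midpoint_le (hL : 0 < L) {x y : ℝ} (hx : 0 < x) (hy : 0 < y) :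
    berhuQuad L b ((x + y) / 2) ≤ (berhuQuad L b x + berhuQuad L b y) / 2 := by
  have hgap := berhuQuad_midpoint_gap (b := b) hL.ne' hx hy
  have : 0 ≤ b ^ 2 * (x - y) ^ 2 / (4 * L * (x * y * (x + y))) := by positivity
  linarith

theorem berhuQuad_midpoint_lt (hL : 0 < L) (hb : b ≠ 0) {x y : ℝ} (hx : 0 < x) (hy : 0 < y)
    (hxy : x ≠ y) :
    berhuQuad L b ((x + y) / 2) < (berhuQuad L b x + berhuQuad L b y) / 2 := by
  have hgap := berhuQuad_midpoint_gap (b := b) hL.ne' hx hy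
  have : (x - y) ^ 2 ≠ 0 := pow_ne_zero 2 (sub_ne_zero.mpr hxy)
  have : 0 < b ^ 2 * (x - y) ^ 2 / (4 * L * (x * y * (x + y))) := by positivity
  linarith

theorem berhuQuad_antitoneOn (hL : 0 < L) : AntitoneOn (berhuQuad L b) (Ioc 0 (|b| / L)) := by
  rintro x ⟨hx, -⟩ y ⟨hy, hyb⟩ hxy
  have hgap : berhuQuad L b x - berhuQuad L b y =
      (y - x) * (b ^ 2 - L ^ 2 * (x * y)) / (2 * L * (x * y)) := by
    unfold berhuQuad
    field_simp
    ring
  have hLy : L * y ≤ |b| := by rwa [le_div_iff₀ hL, mul_comm] at hyb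
  have hxy2 : L ^ 2 * (x * y) ≤ b ^ 2 := by
    rw [← sq_abs b]
    nlinarith [mul_le_mul hLy hLy (by positivity) (abs_nonneg b), mul_pos hL hx]
  have : 0 ≤ (y - x) * (b ^ 2 - L ^ 2 * (x * y)) / (2 * L * (x * y)) :=
    div_nonneg (mul_nonneg (by linarith) (by linarith)) (by positivity)
  linarith

/-- `min · t` is concave and `berhuQuad L b` is antitone below `t = |b| / L`. -/
theorem berhuQuad_min_midpoint_le (hL : 0 < L) (hb : b ≠ 0) {x y : ℝ} (hx : 0 < x)
    (hy : 0 < y) :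
    berhuQuad L b (min ((x + y) / 2) (|b| / L)) ≤
      berhuQuad L b ((min x (|b| / L) + min y (|b| / L)) / 2) := by
  have ht : 0 < |b| / L := div_pos (abs_pos.mpr hb) hL
  have hx' := lt_min hx ht
  have hy' := lt_min hy ht
  have hmid : (min x (|b| / L) + min y (|b| / L)) / 2 ∈ Ioc 0 (|b| / L) :=
    ⟨by positivity, by linarith [min_le_right x (|b| / L), min_le_right y (|b| / L)]⟩
  refine berhuQuad_antitoneOn hL hmid ⟨lt_min (by positivity) ht, min_le_right _ _⟩
    (le_min ?_ ?_)
  all_goals linarith [min_le_left x (|b| / L), min_le_right x (|b| / L),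
    min_le_left y (|b| / L), min_le_right y (|b| / L)]

theorem mul_berhu_div_midpoint_le (hL : 0 < L) (hb : b ≠ 0) {x y : ℝ} (hx : 0 < x)
    (hy : 0 < y) :
    (x + y) / 2 * berhu L (b / ((x + y) / 2)) ≤
      (x * berhu L (b / x) + y * berhu L (b / y)) / 2 := by
  have ht : 0 < |b| / L := div_pos (abs_pos.mpr hb) hL
  rw [mul_berhu_div hL hb hx, mul_berhu_div hL hb hy, mul_berhu_div hL hb (by positivity)]
  exact (berhuQuad_min_midpoint_le hL hb hx hy).trans
    (berhuQuad_midpoint_le hL (lt_min hx ht) (lt_min hy ht))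

theorem mul_berhu_div_midpoint_lt (hL : 0 < L) (hb : b ≠ 0) {x y : ℝ} (hx : 0 < x)
    (hxy : x < y) (hxb : x < |b| / L) :
    (x + y) / 2 * berhu L (b / ((x + y) / 2)) <
      (x * berhu L (b / x) + y * berhu L (b / y)) / 2 := by
  have ht : 0 < |b| / L := div_pos (abs_pos.mpr hb) hL
  have hy : 0 < y := hx.trans hxy
  have hne : min x (|b| / L) ≠ min y (|b| / L) := by
    rw [min_eq_left hxb.le]
    exact (lt_min hxy hxb).ne
  rw [mul_berhu_div hL hb hx, mul_berhu_div hL hb hy, mul_berhu_div hL hb (by positivity)]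
  exact (berhuQuad_min_midpoint_le hL hb hx hy).trans_lt
    (berhuQuad_midpoint_lt hL hb (lt_min hx ht) (lt_min hy ht) hne)

end Berhu

theorem exists_isMinOn_Ioi_of_tendsto {α : Type*} [LinearOrder α] [TopologicalSpace α]
    [ClosedIicTopology α] {f : ℝ → α} (hf : ContinuousOn f (Ioi 0))
    (h0 : Tendsto f (𝓝[>] 0) atTop) (hinf : Tendsto f atTop atTop) :
    ∃ x, 0 < x ∧ IsMinOn f (Ioi 0) x := by
  -- Reparametrize by `τ = exp u` to work on all of `ℝ`, where coercivity means `cocompact`.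
  have hcont : Continuous (f ∘ Real.exp) :=
    hf.comp_continuous Real.continuous_exp Real.exp_pos
  have hcoer : Tendsto (f ∘ Real.exp) (cocompact ℝ) atTop := by
    rw [cocompact_eq_atBot_atTop, tendsto_sup]
    exact ⟨h0.comp Real.tendsto_exp_atBot_nhdsGT, hinf.comp Real.tendsto_exp_atTop⟩
  obtain ⟨u, hu⟩ := hcont.exists_forall_le hcoer
  refine ⟨Real.exp u, Real.exp_pos u, isMinOn_iff.mpr fun y hy => ?_⟩
  simpa [Real.exp_log (mem_Ioi.mp hy)] using hu (Real.log y)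

section Objective

variable {ι : Type*} (L A : ℝ) (S : Finset ι) (b c : ι → ℝ)

noncomputable def berhuScaleObjective (τ : ℝ) : ℝ :=
  τ * (A + ∑ j ∈ S, berhu L (b j / τ) / c j)

theorem berhuScaleObjective_eq (τ : ℝ) :
    berhuScaleObjective L A S b c τ = A * τ + ∑ j ∈ S, τ * berhu L (b j / τ) / c j := by
  rw [berhuScaleObjective, mul_add, Finset.mul_sum, mul_comm]
  simp only [mul_div_assoc]

theorem continuousOn_berhuScaleObjective : ContinuousOn (berhuScaleObjective L A S b c) (Ioi 0) :=
  continuousOn_id.mul <| continuousOn_const.add <| continuousOn_finsetSum _ fun _ _ =>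
    ((continuous_berhu L).comp_continuousOn
      (continuousOn_const.div continuousOn_id fun _ hτ => (mem_Ioi.mp hτ).ne')).div_const _

variable {L A S b c}

theorem mul_le_berhuScaleObjective (hL : 0 < L) (hc : ∀ j ∈ S, 0 < c j) {τ : ℝ} (hτ : 0 < τ) :
    A * τ ≤ berhuScaleObjective L A S b c τ := by
  rw [berhuScaleObjective_eq]
  have : 0 ≤ ∑ j ∈ S, τ * berhu L (b j / τ) / c j :=
    Finset.sum_nonneg fun j hj => div_nonneg (mul_nonneg hτ.le (berhu_nonneg hL _)) (hc j hj).le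
  linarith

theorem inv_le_berhuScaleObjective (hL : 0 < L) (hA : 0 ≤ A) (hc : ∀ j ∈ S, 0 < c j) {i : ι}
    (hi : i ∈ S) {τ : ℝ} (hτ : 0 < τ) :
    b i ^ 2 / (2 * L * c i) * τ⁻¹ ≤ berhuScaleObjective L A S b c τ := by
  rw [berhuScaleObjective_eq]
  have hterm : b i ^ 2 / (2 * L * c i) * τ⁻¹ ≤ τ * berhu L (b i / τ) / c i := by
    calc b i ^ 2 / (2 * L * c i) * τ⁻¹ = τ * ((b i / τ) ^ 2 / (2 * L)) / c i := by
          field_simp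
      _ ≤ τ * berhu L (b i / τ) / c i := by
          gcongr
          · exact (hc i hi).le
          · exact sq_div_le_berhu hL _
  have hsum : τ * berhu L (b i / τ) / c i ≤ ∑ j ∈ S, τ * berhu L (b j / τ) / c j :=
    Finset.single_le_sum (f := fun j => τ * berhu L (b j / τ) / c j)
      (fun j hj => div_nonneg (mul_nonneg hτ.le (berhu_nonneg hL _)) (hc j hj).le) hi
  linarith [mul_nonneg hA hτ.le]

theorem exists_isMinOn_berhuScaleObjective (hL : 0 < L) (hA : 0 < A) (hc : ∀ j ∈ S, 0 < c j)
    (hS : ∃ i ∈ S, b i ≠ 0) :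
    ∃ τ, 0 < τ ∧ IsMinOn (berhuScaleObjective L A S b c) (Ioi 0) τ := by
  obtain ⟨i, hi, hbi⟩ := hS
  refine exists_isMinOn_Ioi_of_tendsto (continuousOn_berhuScaleObjective L A S b c) ?_ ?_
  · have hK : 0 < b i ^ 2 / (2 * L * c i) := by have := hc i hi; positivity
    refine tendsto_atTop_mono' _ ?_ (tendsto_inv_nhdsGT_zero.const_mul_atTop hK)
    filter_upwards [self_mem_nhdsWithin] with τ hτ
    exact inv_le_berhuScaleObjective hL hA.le hc hi hτ
  · refine tendsto_atTop_mono' _ ?_ (tendsto_id.const_mul_atTop hA)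
    filter_upwards [eventually_gt_atTop 0] with τ hτ
    exact mul_le_berhuScaleObjective hL hc hτ

theorem berhuScaleObjective_midpoint_lt_or_lt (hL : 0 < L) (hA : 0 < A) (hc : ∀ j ∈ S, 0 < c j)
    (hb : ∀ j ∈ S, b j ≠ 0) {x y : ℝ} (hx : 0 < x) (hxy : x < y) :
    berhuScaleObjective L A S b c ((x + y) / 2) <
        (berhuScaleObjective L A S b c x + berhuScaleObjective L A S b c y) / 2 ∨
      berhuScaleObjective L A S b c x < berhuScaleObjective L A S b c y := by
  have hy : 0 < y := hx.trans hxy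
  simp only [berhuScaleObjective_eq]
  by_cases h : ∃ j ∈ S, x < |b j| / L
  · left
    obtain ⟨i, hi, hxi⟩ := h
    have hsum : ∑ j ∈ S, (x + y) / 2 * berhu L (b j / ((x + y) / 2)) / c j <
        ∑ j ∈ S, (x * berhu L (b j / x) + y * berhu L (b j / y)) / 2 / c j :=
      Finset.sum_lt_sum
        (fun j hj => div_le_div_of_nonneg_right
          (mul_berhu_div_midpoint_le hL (hb j hj) hx hy) (hc j hj).le)
        ⟨i, hi, div_lt_div_of_pos_right (mul_berhu_div_midpoint_lt hL (hb i hi) hx hxy hxi)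
          (hc i hi)⟩
    have hsplit : ∑ j ∈ S, (x * berhu L (b j / x) + y * berhu L (b j / y)) / 2 / c j =
        (∑ j ∈ S, x * berhu L (b j / x) / c j + ∑ j ∈ S, y * berhu L (b j / y) / c j) / 2 := by
      rw [← Finset.sum_add_distrib, Finset.sum_div]
      exact Finset.sum_congr rfl fun j _ => by ring
    linarith
  · right
    push Not at h
    have hconst : ∑ j ∈ S, y * berhu L (b j / y) / c j = ∑ j ∈ S, x * berhu L (b j / x) / c j :=
      Finset.sum_congr rfl fun j hj => by
        rw [mul_berhu_div_of_le hL hy ((h j hj).trans hxy.le), mul_berhu_div_of_le hL hx (h j hj)]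
    linarith [mul_lt_mul_of_pos_left hxy hA]

theorem eq_of_isMinOn_berhuScaleObjective (hL : 0 < L) (hA : 0 < A) (hc : ∀ j ∈ S, 0 < c j)
    (hb : ∀ j ∈ S, b j ≠ 0) {x y : ℝ} (hx : 0 < x) (hy : 0 < y)
    (hxmin : IsMinOn (berhuScaleObjective L A S b c) (Ioi 0) x)
    (hymin : IsMinOn (berhuScaleObjective L A S b c) (Ioi 0) y) : x = y := by
  have not_both_min : ∀ {x y : ℝ}, 0 < x → x < y →
      IsMinOn (berhuScaleObjective L A S b c) (Ioi 0) x →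
      IsMinOn (berhuScaleObjective L A S b c) (Ioi 0) y → False := by
    intro x y hx hxy hxmin hymin
    have hy : 0 < y := hx.trans hxy
    have hxy_eq := le_antisymm (isMinOn_iff.mp hxmin y hy) (isMinOn_iff.mp hymin x hx)
    have hmid := isMinOn_iff.mp hxmin ((x + y) / 2) (by positivity : (0 : ℝ) < (x + y) / 2)
    rcases berhuScaleObjective_midpoint_lt_or_lt hL hA hc hb hx hxy with h | h <;> linarith
  rcases lt_trichotomy x y with h | h | h
  · exact (not_both_min hx h hxmin hymin).elim
  · exact h
  · exact (not_both_min hy h hymin hxmin).elim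

theorem existsUnique_isMinOn_berhuScaleObjective (hL : 0 < L) (hA : 0 < A)
    (hc : ∀ j ∈ S, 0 < c j) (hb : ∀ j ∈ S, b j ≠ 0) (hS : S.Nonempty) :
    ∃! τ, 0 < τ ∧ IsMinOn (berhuScaleObjective L A S b c) (Ioi 0) τ := by
  obtain ⟨i, hi⟩ := hS
  obtain ⟨τ, hτ, hmin⟩ := exists_isMinOn_berhuScaleObjective hL hA hc ⟨i, hi, hb i hi⟩
  exact ⟨τ, ⟨hτ, hmin⟩, fun σ ⟨hσ, hσmin⟩ =>
    eq_of_isMinOn_berhuScaleObjective hL hA hc hb hσ hτ hσmin hmin⟩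

end Objective

theorem berhu_scale_unique_min_general (L γ : ℝ) (hL : 0 < L)
    (p p₀ : ℕ) (hp₀ : 1 ≤ p₀) (hp : p₀ ≤ p) (β : Fin p → ℝ)
    (hnz : ∀ j : Fin p, (j : ℕ) < p₀ → β j ≠ 0) :
    ∃ τstar : ℝ, 0 < τstar ∧
      (∀ τ : ℝ, 0 < τ →
        τstar * ((∑ j : Fin p, |β j| ^ γ) +
            ∑ j ∈ Finset.univ.filter (fun j : Fin p => (j : ℕ) < p₀),
              berhu L (β j / τstar) / |β j| ^ γ) ≤
          τ * ((∑ j : Fin p, |β j| ^ γ) +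
            ∑ j ∈ Finset.univ.filter (fun j : Fin p => (j : ℕ) < p₀),
              berhu L (β j / τ) / |β j| ^ γ)) ∧
      ∀ τ' : ℝ, 0 < τ' →
        (∀ τ : ℝ, 0 < τ →
          τ' * ((∑ j : Fin p, |β j| ^ γ) +
              ∑ j ∈ Finset.univ.filter (fun j : Fin p => (j : ℕ) < p₀),
                berhu L (β j / τ') / |β j| ^ γ) ≤
            τ * ((∑ j : Fin p, |β j| ^ γ) +
              ∑ j ∈ Finset.univ.filter (fun j : Fin p => (j : ℕ) < p₀),
                berhu L (β j / τ) / |β j| ^ γ)) → τ' = τstar := by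
  set S := Finset.univ.filter (fun j : Fin p => (j : ℕ) < p₀)
  have hb : ∀ j ∈ S, β j ≠ 0 := fun j hj => hnz j (Finset.mem_filter.mp hj).2
  have hc : ∀ j ∈ S, 0 < |β j| ^ γ := fun j hj => Real.rpow_pos_of_pos (abs_pos.mpr (hb j hj)) γ
  have h0 : (⟨0, by omega⟩ : Fin p) ∈ S := Finset.mem_filter.mpr ⟨Finset.mem_univ _, hp₀⟩
  have hA : 0 < ∑ j : Fin p, |β j| ^ γ :=
    Finset.sum_pos' (fun j _ => Real.rpow_nonneg (abs_nonneg _) γ) ⟨_, Finset.mem_univ _, hc _ h0⟩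
  obtain ⟨τs, ⟨hτs, hmin⟩, huniq⟩ :=
    existsUnique_isMinOn_berhuScaleObjective hL hA hc hb ⟨_, h0⟩
  exact ⟨τs, hτs, fun τ hτ => isMinOn_iff.mp hmin τ hτ,
    fun τ' hτ' hτ'min => huniq τ' ⟨hτ', isMinOn_iff.mpr hτ'min⟩⟩

theorem berhu_scale_unique_min (L γ : ℝ) (hL : 0 < L) (hγ : 0 < γ)
    (p p₀ : ℕ) (hp₀ : 1 ≤ p₀) (hp : p₀ ≤ p) (β : Fin p → ℝ)
    (hnz : ∀ j : Fin p, (j : ℕ) < p₀ → β j ≠ 0)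
    (hz : ∀ j : Fin p, p₀ ≤ (j : ℕ) → β j = 0) :
    ∃ τstar : ℝ, 0 < τstar ∧
      (∀ τ : ℝ, 0 < τ →
        τstar * ((∑ j : Fin p, |β j| ^ γ) +
            ∑ j ∈ Finset.univ.filter (fun j : Fin p => (j : ℕ) < p₀),
              berhu L (β j / τstar) / |β j| ^ γ) ≤
          τ * ((∑ j : Fin p, |β j| ^ γ) +
            ∑ j ∈ Finset.univ.filter (fun j : Fin p => (j : ℕ) < p₀),
              berhu L (β j / τ) / |β j| ^ γ)) ∧
      ∀ τ' : ℝ, 0 < τ' →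
        (∀ τ : ℝ, 0 < τ →
          τ' * ((∑ j : Fin p, |β j| ^ γ) +
              ∑ j ∈ Finset.univ.filter (fun j : Fin p => (j : ℕ) < p₀),
                berhu L (β j / τ') / |β j| ^ γ) ≤
            τ * ((∑ j : Fin p, |β j| ^ γ) +
              ∑ j ∈ Finset.univ.filter (fun j : Fin p => (j : ℕ) < p₀),
                berhu L (β j / τ) / |β j| ^ γ)) → τ' = τstar :=
  berhu_scale_unique_min_general L γ hL p p₀ hp₀ hp β hnz
end

section
/- Explicit distance to the epigraph of a scaled absolute-value function: for c > 0, let f(u) = c|u| on ℝ and consider the epigraph E = {(u, t) : c|u| ≤ t} ⊂ ℝ². Then for (x, t) ∈ ℝ², the Euclidean distance from (x,t) to E equals sqrt(x² + t²) if t ≤ −|x|/c; equals (c|x| − t)/sqrt(1 + c²) if −|x|/c < t ≤ c|x|; and equals 0 if t > c|x|. -/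
private lemma key_abs (c : ℝ) (hc : 0 < c) (x t : ℝ) (hx : 0 ≤ x) :
    sInf {d : ℝ | ∃ u s : ℝ, c * |u| ≤ s ∧ d = Real.sqrt ((x - u) ^ 2 + (t - s) ^ 2)} =
      if t ≤ -|x| / c then Real.sqrt (x ^ 2 + t ^ 2)
      else if t ≤ c * |x| then (c * |x| - t) / Real.sqrt (1 + c ^ 2)
      else 0 := by
  rw [abs_of_nonneg hx]
  have hc2 : (0:ℝ) < 1 + c ^ 2 := by positivity
  have hs2 : (0:ℝ) < Real.sqrt (1 + c ^ 2) := Real.sqrt_pos.mpr hc2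
  have hbdd : BddBelow {d : ℝ | ∃ u s : ℝ, c * |u| ≤ s ∧
      d = Real.sqrt ((x - u) ^ 2 + (t - s) ^ 2)} := by
    refine ⟨0, ?_⟩
    rintro d ⟨u, s, _, rfl⟩
    exact Real.sqrt_nonneg _
  apply le_antisymm
  · split_ifs with h1 h2
    · exact csInf_le hbdd ⟨0, 0, by simp, by norm_num⟩
    · push_neg at h1
      have hxct : -x < c * t := by
        have := (div_lt_iff₀ hc).mp h1
        linarith
      have hu0 : 0 ≤ (x + c * t) / (1 + c ^ 2) := div_nonneg (by linarith) hc2.le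
      refine csInf_le hbdd ⟨(x + c * t) / (1 + c ^ 2), c * ((x + c * t) / (1 + c ^ 2)),
        le_of_eq (by rw [abs_of_nonneg hu0]), ?_⟩
      have hkey : (x - (x + c * t) / (1 + c ^ 2)) ^ 2 +
          (t - c * ((x + c * t) / (1 + c ^ 2))) ^ 2 = (c * x - t) ^ 2 / (1 + c ^ 2) := by
        field_simp
        ring
      rw [hkey, Real.sqrt_div (sq_nonneg _), Real.sqrt_sq (by linarith)]
    · push_neg at h2
      exact csInf_le hbdd ⟨x, t, by rw [abs_of_nonneg hx]; linarith, by simp⟩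
  · have hne : {d : ℝ | ∃ u s : ℝ, c * |u| ≤ s ∧
        d = Real.sqrt ((x - u) ^ 2 + (t - s) ^ 2)}.Nonempty :=
      ⟨Real.sqrt ((x - 0) ^ 2 + (t - |t|) ^ 2), 0, |t|, by simp [abs_nonneg t], rfl⟩
    apply le_csInf hne
    rintro d ⟨u, s, hus, rfl⟩
    have hsnn : 0 ≤ s := le_trans (by positivity) hus
    split_ifs with h1 h2
    · apply Real.sqrt_le_sqrt
      have hct : t * c ≤ -x := (le_div_iff₀ hc).mp h1
      have ht0 : t ≤ 0 := by nlinarith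
      have hint1 : 0 ≤ x * (|u| - u) := mul_nonneg hx (by linarith [le_abs_self u])
      have hint2 : 0 ≤ (-t) * (s - c * |u|) := mul_nonneg (by linarith) (by linarith)
      have hint3 : 0 ≤ |u| * (-(x + t * c)) :=
        mul_nonneg (abs_nonneg u) (by linarith)
      nlinarith [sq_nonneg u, sq_nonneg s]
    · rw [div_le_iff₀ hs2,
        ← Real.sqrt_mul (by positivity : (0:ℝ) ≤ (x - u) ^ 2 + (t - s) ^ 2)]
      have e1 : c * (x - u) ≤ c * |x - u| := mul_le_mul_of_nonneg_left (le_abs_self _) hc.le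
      have e2 : c * u ≤ c * |u| := mul_le_mul_of_nonneg_left (le_abs_self _) hc.le
      have e3 : s - t ≤ |s - t| := le_abs_self _
      have h0 : 0 ≤ c * x - t := by linarith
      have habs : c * x - t ≤ c * |x - u| + |s - t| := by linarith
      rw [Real.le_sqrt h0 (by positivity)]
      have hsq : (c * x - t) ^ 2 ≤ (c * |x - u| + |s - t|) ^ 2 :=
        pow_le_pow_left₀ h0 habs 2
      nlinarith [sq_nonneg (c * |s - t| - |x - u|), sq_abs (x - u), sq_abs (s - t)]
    · exact Real.sqrt_nonneg _

theorem dist_epigraph_abs (c : ℝ) (hc : 0 < c) (x t : ℝ) :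
    sInf {d : ℝ | ∃ u s : ℝ, c * |u| ≤ s ∧ d = Real.sqrt ((x - u) ^ 2 + (t - s) ^ 2)} =
      if t ≤ -|x| / c then Real.sqrt (x ^ 2 + t ^ 2)
      else if t ≤ c * |x| then (c * |x| - t) / Real.sqrt (1 + c ^ 2)
      else 0 := by
  rcases le_total 0 x with hx | hx
  · exact key_abs c hc x t hx
  · have hset : {d : ℝ | ∃ u s : ℝ, c * |u| ≤ s ∧
        d = Real.sqrt ((x - u) ^ 2 + (t - s) ^ 2)} =
      {d : ℝ | ∃ u s : ℝ, c * |u| ≤ s ∧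
        d = Real.sqrt ((-x - u) ^ 2 + (t - s) ^ 2)} := by
      ext d
      simp only [Set.mem_setOf_eq]
      constructor
      · rintro ⟨u, s, h1, rfl⟩
        exact ⟨-u, s, by rwa [abs_neg], by congr 1; ring⟩
      · rintro ⟨u, s, h1, rfl⟩
        exact ⟨-u, s, by rwa [abs_neg], by congr 1; ring⟩
    have h := key_abs c hc (-x) t (by linarith)
    rw [abs_neg, neg_sq] at h
    rw [hset]
    exact h
end
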